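/- Let F be a field, let c, d ∈ F, and let u₁, u₂ be nonzero elements of F. Set ū₁ = (d·u₂ + c)(u₂ + d)/(u₁u₂) and ū₂ = (ū₁ + c)/(u₂(ū₁ + 1)), and assume ū₁, ū₂ and ū₁ + 1 are nonzero. Then the rational function K₁(u₁,u₂) = (u₁ + d·u₂ + c)·((u₁+1)u₂ + d)/(u₁u₂) is invariant under the QRT map: K₁(ū₁,ū₂) = K₁(u₁,u₂). -/

import Mathlib

/-- The first integral `K₁(u₁,u₂) = (u₁ + d·u₂ + c)((u₁+1)u₂ + d)/(u₁u₂)`. -/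
noncomputable def K₁ {F : Type*} [Field F] (c d u₁ u₂ : F) : F :=
  (u₁ + d * u₂ + c) * ((u₁ + 1) * u₂ + d) / (u₁ * u₂)

/-!
For fixed `u₂`, the curve of the pencil through `(u₁, u₂)` meets the horizontal line in the
roots of a quadratic in `u₁` with root product `(d u₂ + c)(u₂ + d)/u₂`; for fixed `u₁` it meets
the vertical line in the roots of a quadratic in `u₂` with root product `(u₁ + c)/(u₁ + 1)`.
The switches `ι_h`, `ι_v` exchange these roots, so by Vieta they preserve `K₁`, and hence so
does `ψ̂ = ι_v ∘ ι_h`.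
-/

section QRT

variable {F : Type*} [Field F]

-- Both sides equal `a * x + b + a * y`.
theorem quadratic_div_eq_of_mul_mul_eq {a b e x y : F} (hx : x ≠ 0) (hy : y ≠ 0)
    (h : a * x * y = e) : (a * x ^ 2 + b * x + e) / x = (a * y ^ 2 + b * y + e) / y := by
  subst h
  field_simp
  ring

/-- `ι_h (u₁, u₂) = (horizontalSwitch c d u₁ u₂, u₂)`. -/
noncomputable def horizontalSwitch (c d u₁ u₂ : F) : F :=
  (d * u₂ + c) * (u₂ + d) / (u₁ * u₂)

/-- `ι_v (u₁, u₂) = (u₁, verticalSwitch c u₁ u₂)`. -/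
noncomputable def verticalSwitch (c u₁ u₂ : F) : F :=
  (u₁ + c) / (u₂ * (u₁ + 1))

theorem K₁_eq_quadratic_fst (c d u₁ u₂ : F) :
    K₁ c d u₁ u₂ =
      (u₂ * u₁ ^ 2 + (u₂ + d + (d * u₂ + c) * u₂) * u₁ + (d * u₂ + c) * (u₂ + d)) / u₁ / u₂ := by
  rw [K₁, div_div]
  ring

theorem K₁_eq_quadratic_snd (c d u₁ u₂ : F) :
    K₁ c d u₁ u₂ =
      (d * (u₁ + 1) * u₂ ^ 2 + (d ^ 2 + (u₁ + c) * (u₁ + 1)) * u₂ + (u₁ + c) * d) / u₂ / u₁ := by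
  rw [K₁, div_div, mul_comm u₂ u₁]
  ring

theorem K₁_horizontalSwitch {c d u₁ u₂ : F} (h₁ : u₁ ≠ 0) (h₂ : u₂ ≠ 0)
    (h : horizontalSwitch c d u₁ u₂ ≠ 0) :
    K₁ c d (horizontalSwitch c d u₁ u₂) u₂ = K₁ c d u₁ u₂ := by
  rw [K₁_eq_quadratic_fst, K₁_eq_quadratic_fst,
    quadratic_div_eq_of_mul_mul_eq h h₁ (by rw [horizontalSwitch]; field_simp)]

theorem K₁_verticalSwitch {c d u₁ u₂ : F} (h₂ : u₂ ≠ 0) (h : u₁ + 1 ≠ 0)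
    (hv : verticalSwitch c u₁ u₂ ≠ 0) :
    K₁ c d u₁ (verticalSwitch c u₁ u₂) = K₁ c d u₁ u₂ := by
  rw [K₁_eq_quadratic_snd, K₁_eq_quadratic_snd,
    quadratic_div_eq_of_mul_mul_eq hv h₂ (by rw [verticalSwitch]; field_simp)]

end QRT

theorem qrt_map_first_integral {F : Type*} [Field F] (c d u₁ u₂ : F)
    (h₁ : u₁ ≠ 0) (h₂ : u₂ ≠ 0)
    (hbar₁ : (d * u₂ + c) * (u₂ + d) / (u₁ * u₂) ≠ 0)
    (hbar₁' : (d * u₂ + c) * (u₂ + d) / (u₁ * u₂) + 1 ≠ 0)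
    (hbar₂ : ((d * u₂ + c) * (u₂ + d) / (u₁ * u₂) + c) /
        (u₂ * ((d * u₂ + c) * (u₂ + d) / (u₁ * u₂) + 1)) ≠ 0) :
    K₁ c d ((d * u₂ + c) * (u₂ + d) / (u₁ * u₂))
        (((d * u₂ + c) * (u₂ + d) / (u₁ * u₂) + c) /
          (u₂ * ((d * u₂ + c) * (u₂ + d) / (u₁ * u₂) + 1))) =
      K₁ c d u₁ u₂ :=
  (K₁_verticalSwitch (d := d) h₂ hbar₁' hbar₂).trans (K₁_horizontalSwitch h₁ h₂ hbar₁)
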